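/- Let ∇ be a torsion-free connection on a symplectic manifold (M, ω) with ∇ω = 0, and let X be a vector field preserving ω (ℒ_X ω = 0). Then the tensor A(Y)Z := (ℒ_X∇)(Y)Z satisfies that ω(A(Y)Z, W) is completely symmetric in Y, Z, W; i.e., ℒ_X∇ is tangent to the affine space of symplectic connections. -/
import Mathlib


/-- (Koszul-algebraic formulation.)  For a symplectic connection `∇` on `(M,ω)`
and a symplectic vector field `X` (`ℒ_X ω = 0`), the tensor `A(Y)Z := (ℒ_X∇)(Y)Z` has
completely symmetric `ω(A(Y)Z, W)`; i.e. `ℒ_X∇` is tangent to the space of symplectic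
connections. -/
theorem stmt_7 (R : Type*) [CommRing R] (L : Type*) [LieRing L] [Module R L]
    (ω : L →ₗ[R] L →ₗ[R] R)
    (hanti : ∀ Y Z : L, ω Y Z = -ω Z Y)
    (act : L → R → R)
    -- act models the action of vector fields on functions:
    (hactadd : ∀ (Y : L) (r s : R), act Y (r + s) = act Y r + act Y s)
    (hactmul : ∀ (Y : L) (r s : R), act Y (r * s) = act Y r * s + r * act Y s)
    (hactbr : ∀ (Y Z : L) (r : R), act ⁅Y, Z⁆ r = act Y (act Z r) - act Z (act Y r))
    (D : L → L → L)
    -- D is a symplectic connection: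
    (hDadd1 : ∀ Y Y' Z : L, D (Y + Y') Z = D Y Z + D Y' Z)
    (hDadd2 : ∀ Y Z Z' : L, D Y (Z + Z') = D Y Z + D Y Z')
    (hD1 : ∀ (r : R) (Y Z : L), D (r • Y) Z = r • D Y Z)
    (hD2 : ∀ (r : R) (Y Z : L), D Y (r • Z) = act Y r • Z + r • D Y Z)
    (htf : ∀ Y Z : L, D Y Z - D Z Y = ⁅Y, Z⁆)
    (hpar : ∀ Y Z W : L, act Y (ω Z W) = ω (D Y Z) W + ω Z (D Y W))
    -- X is a symplectic vector field: ℒ_X ω = 0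
    (X : L)
    (hX : ∀ Y Z : L, act X (ω Y Z) = ω ⁅X, Y⁆ Z + ω Y ⁅X, Z⁆) :
    ∀ Y Z W : L,
      ω (⁅X, D Y Z⁆ - D ⁅X, Y⁆ Z - D Y ⁅X, Z⁆) W
          = ω (⁅X, D Z Y⁆ - D ⁅X, Z⁆ Y - D Z ⁅X, Y⁆) W ∧
      ω (⁅X, D Y Z⁆ - D ⁅X, Y⁆ Z - D Y ⁅X, Z⁆) W
          = ω (⁅X, D Y W⁆ - D ⁅X, Y⁆ W - D Y ⁅X, W⁆) Z := by
  intro Y Z W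
  constructor
  · have hv : ⁅X, D Y Z⁆ - D ⁅X, Y⁆ Z - D Y ⁅X, Z⁆
        = ⁅X, D Z Y⁆ - D ⁅X, Z⁆ Y - D Z ⁅X, Y⁆ := by
      have e1 : D Y Z = D Z Y + ⁅Y, Z⁆ := by rw [← htf Y Z]; abel
      have e2 : D ⁅X, Y⁆ Z = D Z ⁅X, Y⁆ + ⁅⁅X, Y⁆, Z⁆ := by rw [← htf ⁅X, Y⁆ Z]; abel
      have e3 : D Y ⁅X, Z⁆ = D ⁅X, Z⁆ Y + ⁅Y, ⁅X, Z⁆⁆ := by rw [← htf Y ⁅X, Z⁆]; abel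
      rw [e1, e2, e3, lie_add, leibniz_lie]
      abel
    rw [hv]
  · have h1 := hX (D Y Z) W
    have h3 := hpar ⁅X, Y⁆ Z W
    have h4 := hpar Y ⁅X, Z⁆ W
    have h5 := hX Z (D Y W)
    have h8 := hpar Y Z ⁅X, W⁆
    have hbr := hactbr X Y (ω Z W)
    have hXY : act X (act Y (ω Z W))
        = act X (ω (D Y Z) W) + act X (ω Z (D Y W)) := by
      rw [hpar Y Z W, hactadd]
    have hYX : act Y (act X (ω Z W))
        = act Y (ω ⁅X, Z⁆ W) + act Y (ω Z ⁅X, W⁆) := by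
      rw [hX Z W, hactadd]
    have ha1 := hanti ⁅X, D Y W⁆ Z
    have ha2 := hanti (D ⁅X, Y⁆ W) Z
    have ha3 := hanti (D Y ⁅X, W⁆) Z
    simp only [map_sub, LinearMap.sub_apply]
    linear_combination -h1 + h3 + h4 - hbr - hXY + hYX - h5 + h8 - ha1 + ha2 + ha3
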